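/- Let A be the lazy renewal matrix. Then (a) the partition of the positive integers into H^(1) = {1}, H^(2) = {even positive integers} and H^(3) = {odd integers ≥ 3} is an A-orthogonal division; (b) every A-orthogonal division for A has at least 3 parts; and (c) every A-orthogonal division for A has at least two infinite parts. Consequently m_A = 3 and P_A = 2 for the lazy renewal matrix. -/

import Mathlib

/-- An `A`-orthogonal division: a partition of the positive integers into `m` parts
`H 0, …, H (m-1)` such that `|ρ_A^{-1}(k) ∩ H l| ≤ 1` for every `k` and every part `l`,
where `ρ_A^{-1}(k) = {j : A(j,k) = 1}`. -/
def IsOrthDiv (A : ℕ+ → ℕ+ → Bool) (m : ℕ) (H : Fin m → Set ℕ+) : Prop :=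
  (∀ x : ℕ+, ∃! l : Fin m, x ∈ H l) ∧
  ∀ (k : ℕ+) (l : Fin m), ({j : ℕ+ | A j k = true} ∩ H l).encard ≤ 1

/-- The lazy renewal matrix: `A(i,j) = 1` iff `i = 1` or `j ∈ {i−1, i}`. -/
def lazyRenewal (i j : ℕ+) : Bool :=
  decide (i = 1 ∨ (j : ℕ) + 1 = (i : ℕ) ∨ j = i)

/-- The division `H⁽¹⁾ = {1}`, `H⁽²⁾ = {even positive integers}`,
`H⁽³⁾ = {odd integers ≥ 3}`. -/
def lazyDiv : Fin 3 → Set ℕ+ :=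
  ![{1}, {x : ℕ+ | (x : ℕ) % 2 = 0}, {x : ℕ+ | (x : ℕ) % 2 = 1 ∧ 3 ≤ (x : ℕ)}]

/-!
Row `1` of the lazy renewal matrix consists of ones, so `1` is alone in its part, and column `k`
has ones in rows `k` and `k + 1`, so no part contains two consecutive integers. Hence `1`, `2`, `3`
lie in three different parts. If at most one part were infinite, the finite parts would cover only
finitely many integers, and two consecutive large integers would share the infinite part. The
division `{1}`, evens, odd numbers `≥ 3` attains both bounds.
-/

theorem Set.two_le_ncard_infinite_of_forall_succ_notMem {ι : Type*} [Finite ι]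
    {H : ι → Set ℕ+} (hcover : ∀ x, ∃ l, x ∈ H l) (hsucc : ∀ l x, x ∈ H l → x + 1 ∉ H l) :
    2 ≤ {l | (H l).Infinite}.ncard := by
  have hlarge : ∀ᶠ x in Filter.cofinite, ∀ l, x ∈ H l → (H l).Infinite := by
    refine Filter.eventually_all.2 fun l => ?_
    by_cases hl : (H l).Infinite
    · exact Filter.Eventually.of_forall fun _ _ => hl
    · exact (Set.not_infinite.1 hl).eventually_cofinite_notMem.mono fun _ hx hmem => absurd hmem hx
  obtain ⟨x, hx, hx1⟩ :=
    (hlarge.and ((add_left_injective 1).tendsto_cofinite.eventually hlarge)).exists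
  obtain ⟨l, hl⟩ := hcover x
  obtain ⟨l', hl'⟩ := hcover (x + 1)
  by_contra! hlt
  have hsame : l = l' :=
    (Set.ncard_le_one (Set.toFinite _)).1 (Nat.le_of_lt_succ hlt) l (hx l hl) l' (hx1 l' hl')
  exact hsucc l x hl (hsame ▸ hl')

theorem IsOrthDiv.eq_of_mem_of_mem {A : ℕ+ → ℕ+ → Bool} {m : ℕ} {H : Fin m → Set ℕ+}
    (h : IsOrthDiv A m H) {l : Fin m} {k a b : ℕ+} (ha : a ∈ H l) (hb : b ∈ H l)
    (hak : A a k = true) (hbk : A b k = true) : a = b :=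
  Set.encard_le_one_iff.1 (h.2 k l) a b ⟨hak, ha⟩ ⟨hbk, hb⟩

theorem lazyRenewal_eq_true_iff {j k : ℕ+} :
    lazyRenewal j k = true ↔ (j : ℕ) = 1 ∨ (k : ℕ) + 1 = j ∨ (k : ℕ) = j := by
  simp only [lazyRenewal, decide_eq_true_eq, ← PNat.coe_inj, PNat.val_ofNat]

theorem lazyRenewal_one_left (k : ℕ+) : lazyRenewal 1 k = true :=
  lazyRenewal_eq_true_iff.2 (Or.inl rfl)

theorem lazyRenewal_self (k : ℕ+) : lazyRenewal k k = true :=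
  lazyRenewal_eq_true_iff.2 (Or.inr (Or.inr rfl))

theorem lazyRenewal_succ_left (k : ℕ+) : lazyRenewal (k + 1) k = true :=
  lazyRenewal_eq_true_iff.2 (Or.inr (Or.inl rfl))

namespace IsOrthDiv

variable {m : ℕ} {H : Fin m → Set ℕ+}

theorem eq_one_of_mem_of_one_mem (h : IsOrthDiv lazyRenewal m H) {l : Fin m} {x : ℕ+}
    (h1 : 1 ∈ H l) (hx : x ∈ H l) : x = 1 :=
  h.eq_of_mem_of_mem hx h1 (lazyRenewal_self x) (lazyRenewal_one_left x)

theorem succ_notMem_of_mem (h : IsOrthDiv lazyRenewal m H) {l : Fin m} {x : ℕ+}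
    (hx : x ∈ H l) : x + 1 ∉ H l := fun hx1 =>
  (PNat.lt_add_right x 1).ne
    (h.eq_of_mem_of_mem hx hx1 (lazyRenewal_self x) (lazyRenewal_succ_left x))

theorem three_le (h : IsOrthDiv lazyRenewal m H) : 3 ≤ m := by
  obtain ⟨l₁, h₁, -⟩ := h.1 1
  obtain ⟨l₂, h₂, -⟩ := h.1 2
  obtain ⟨l₃, h₃, -⟩ := h.1 3
  have h₁₂ : l₁ ≠ l₂ := by
    rintro rfl
    exact absurd (h.eq_one_of_mem_of_one_mem h₁ h₂) (by decide)
  have h₁₃ : l₁ ≠ l₃ := by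
    rintro rfl
    exact absurd (h.eq_one_of_mem_of_one_mem h₁ h₃) (by decide)
  have h₂₃ : l₂ ≠ l₃ := by
    rintro rfl
    exact h.succ_notMem_of_mem h₂ h₃
  simpa [Nat.succ_le_iff] using Fintype.two_lt_card_iff.2 ⟨l₁, l₂, l₃, h₁₂, h₁₃, h₂₃⟩

theorem two_le_ncard_infinite (h : IsOrthDiv lazyRenewal m H) :
    2 ≤ {l : Fin m | (H l).Infinite}.ncard :=
  Set.two_le_ncard_infinite_of_forall_succ_notMem (fun x => (h.1 x).exists)
    fun _ _ => h.succ_notMem_of_mem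

end IsOrthDiv

theorem mem_lazyDiv_iff {x : ℕ+} {l : Fin 3} :
    x ∈ lazyDiv l ↔ (l : ℕ) = 0 ∧ (x : ℕ) = 1 ∨ (l : ℕ) = 1 ∧ (x : ℕ) % 2 = 0 ∨
      (l : ℕ) = 2 ∧ (x : ℕ) % 2 = 1 ∧ 3 ≤ (x : ℕ) := by
  fin_cases l <;> simp [lazyDiv, PNat.coe_eq_one_iff]

theorem isOrthDiv_lazyDiv : IsOrthDiv lazyRenewal 3 lazyDiv := by
  constructor
  · intro x
    have := x.pos
    refine ⟨⟨if (x : ℕ) = 1 then 0 else if (x : ℕ) % 2 = 0 then 1 else 2, by split_ifs <;> omega⟩,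
      mem_lazyDiv_iff.2 ?_, fun l hl => Fin.ext ?_⟩
    · dsimp only
      split_ifs <;> omega
    · have := mem_lazyDiv_iff.1 hl
      dsimp only
      split_ifs <;> omega
  · intro k l
    refine Set.encard_le_one_iff.2 fun a b ha hb => PNat.coe_inj.1 ?_
    simp only [Set.mem_inter_iff, Set.mem_ofPred_eq, lazyRenewal_eq_true_iff, mem_lazyDiv_iff]
      at ha hb
    have := k.pos
    omega

theorem ncard_infinite_lazyDiv_le_two : {l : Fin 3 | (lazyDiv l).Infinite}.ncard ≤ 2 := by
  have hsub : {l : Fin 3 | (lazyDiv l).Infinite} ⊆ {1, 2} := by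
    intro l hl
    fin_cases l
    · exact absurd (Set.finite_singleton 1) hl
    all_goals simp
  exact (Set.ncard_le_ncard hsub).trans (Set.ncard_pair (by decide)).le

/-- for the lazy renewal matrix: (a) the partition
`{1}, {evens}, {odds ≥ 3}` is an `A`-orthogonal division; (b) every `A`-orthogonal
division has at least `3` parts; (c) every `A`-orthogonal division has at least two
infinite parts.  Consequently `m_A = 3` and `P_A = 2`. -/
theorem stmt13 :
    IsOrthDiv lazyRenewal 3 lazyDiv ∧
    (∀ (m : ℕ) (H : Fin m → Set ℕ+), IsOrthDiv lazyRenewal m H → 3 ≤ m) ∧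
    (∀ (m : ℕ) (H : Fin m → Set ℕ+), IsOrthDiv lazyRenewal m H →
      2 ≤ {l : Fin m | (H l).Infinite}.ncard) ∧
    sInf {m : ℕ | ∃ H : Fin m → Set ℕ+, IsOrthDiv lazyRenewal m H} = 3 ∧
    sInf {p : ℕ | ∃ H : Fin 3 → Set ℕ+, IsOrthDiv lazyRenewal 3 H ∧
      {l : Fin 3 | (H l).Infinite}.ncard = p} = 2 := by
  refine ⟨isOrthDiv_lazyDiv, fun _ _ h => h.three_le, fun _ _ h => h.two_le_ncard_infinite,
    IsLeast.csInf_eq ⟨⟨lazyDiv, isOrthDiv_lazyDiv⟩, ?_⟩, IsLeast.csInf_eq ⟨?_, ?_⟩⟩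
  · rintro m ⟨H, h⟩
    exact h.three_le
  · exact ⟨lazyDiv, isOrthDiv_lazyDiv,
      ncard_infinite_lazyDiv_le_two.antisymm isOrthDiv_lazyDiv.two_le_ncard_infinite⟩
  · rintro p ⟨H, h, rfl⟩
    exact h.two_le_ncard_infinite
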